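/- Let L_1, ..., L_m : ℝ^p → ℝ be twice continuously differentiable functions, let q_1, ..., q_m ∈ ℝ, let W ⊆ ℝ^m be an open set, and let w ↦ θ^w be a differentiable map from W to ℝ^p such that for every w ∈ W, Σ_{g=1}^m w_g ∇_θ L_g(θ^w) = 0 and the matrix H(w) = Σ_{g=1}^m w_g ∇²_θ L_g(θ^w) is invertible. Then for every w ∈ W and every index i ∈ {1,...,m}, the partial derivative of the map w ↦ Σ_{g=1}^m q_g L_g(θ^w) with respect to w_i equals −(Σ_{g=1}^m q_g ∇_θ L_g(θ^w))ᵀ H(w)^{-1} ∇_θ L_i(θ^w). -/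

import Mathlib

open scoped BigOperators RealInnerProductSpace

/-!
Differentiating the stationarity identity `∑ g, w g • ∇L_g(θ w) = 0` along `w ↦ w + t eᵢ` gives
`H(w) (θ'(w) eᵢ) + ∇L_i(θ w) = 0`, hence `θ'(w) eᵢ = -H(w)⁻¹ ∇L_i(θ w)`; the chain rule turns the
derivative of `∑ g, q g * L_g(θ w)` in direction `eᵢ` into `⟪∑ g, q g • ∇L_g(θ w), θ'(w) eᵢ⟫`.
-/

open Filter Topology

theorem ContDiff.differentiable_gradient {F : Type*} [NormedAddCommGroup F]
    [InnerProductSpace ℝ F] [CompleteSpace F] {f : F → ℝ} (hf : ContDiff ℝ 2 f) :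
    Differentiable ℝ (gradient f) :=
  (InnerProductSpace.toDual ℝ F).symm.differentiable.comp
    ((hf.fderiv_right (by norm_num)).differentiable one_ne_zero)

theorem sum_smul_fderiv_apply_fderiv_eq_neg {ι E F V : Type*} [Fintype ι]
    [NormedAddCommGroup E] [NormedSpace ℝ E] [NormedAddCommGroup F] [NormedSpace ℝ F]
    [NormedAddCommGroup V] [NormedSpace ℝ V] {a : ι → E →L[ℝ] ℝ} {G : ι → F → V} {θ : E → F}
    {w : E} (hG : ∀ g, DifferentiableAt ℝ (G g) (θ w)) (hθ : DifferentiableAt ℝ θ w)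
    (hstat : ∀ᶠ v in 𝓝 w, ∑ g, a g v • G g (θ v) = 0) (e : E) :
    (∑ g, a g w • fderiv ℝ (G g) (θ w)) (fderiv ℝ θ w e) = -∑ g, a g e • G g (θ w) := by
  have hderiv : HasFDerivAt (fun v => ∑ g, a g v • G g (θ v))
      (∑ g, (a g w • (fderiv ℝ (G g) (θ w)).comp (fderiv ℝ θ w) + (a g).smulRight (G g (θ w))))
      w :=
    HasFDerivAt.fun_sum fun g _ =>
      (a g).hasFDerivAt.smul ((hG g).hasFDerivAt.comp w hθ.hasFDerivAt)
  have hzero := hderiv.unique ((hasFDerivAt_const 0 w).congr_of_eventuallyEq hstat)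
  have hzero_e := congrArg (· e) hzero
  simp only [sum_apply, add_apply, smul_apply, ContinuousLinearMap.comp_apply,
    ContinuousLinearMap.smulRight_apply, zero_apply, Finset.sum_add_distrib] at hzero_e
  simpa only [sum_apply, smul_apply] using eq_neg_of_add_eq_zero_left hzero_e

theorem fderiv_sum_mul_comp_apply {ι E F : Type*} [Fintype ι] [NormedAddCommGroup E]
    [NormedSpace ℝ E] [NormedAddCommGroup F] [InnerProductSpace ℝ F] [CompleteSpace F]
    {L : ι → F → ℝ} {θ : E → F} {w : E} (hL : ∀ g, DifferentiableAt ℝ (L g) (θ w))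
    (hθ : DifferentiableAt ℝ θ w) (q : ι → ℝ) (e : E) :
    fderiv ℝ (fun v => ∑ g, q g * L g (θ v)) w e =
      ⟪∑ g, q g • gradient (L g) (θ w), fderiv ℝ θ w e⟫ := by
  have hderiv : HasFDerivAt (fun v => ∑ g, q g * L g (θ v))
      (∑ g, q g • (fderiv ℝ (L g) (θ w)).comp (fderiv ℝ θ w)) w :=
    HasFDerivAt.fun_sum fun g _ =>
      ((hL g).hasFDerivAt.comp w hθ.hasFDerivAt).const_mul (q g)
  simp only [hderiv.fderiv, sum_apply, smul_apply,
    ContinuousLinearMap.comp_apply, sum_inner, real_inner_smul_left, inner_gradient_left,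
    smul_eq_mul]

theorem EuclideanSpace.sum_proj_single_smul {ι V : Type*} [Fintype ι] [DecidableEq ι]
    [AddCommMonoid V] [Module ℝ V] (x : ι → V) (i : ι) :
    ∑ g, EuclideanSpace.proj g (EuclideanSpace.single i (1 : ℝ)) • x g = x i := by
  simp

/-- Derivative of the weighted objective `w ↦ ∑ g, q g * L g (θ w)` with respect to `w i`,
where `θ w` is a stationary point of `θ ↦ ∑ g, w g * L g θ`. -/
theorem implicit_gradient_formula {m p : ℕ}
    (L : Fin m → EuclideanSpace ℝ (Fin p) → ℝ)
    (hL : ∀ g, ContDiff ℝ 2 (L g))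
    (q : Fin m → ℝ)
    (W : Set (EuclideanSpace ℝ (Fin m))) (hW : IsOpen W)
    (θ : EuclideanSpace ℝ (Fin m) → EuclideanSpace ℝ (Fin p))
    (hθ : ∀ w ∈ W, DifferentiableAt ℝ θ w)
    (hstat : ∀ w ∈ W, ∑ g, w g • gradient (L g) (θ w) = 0)
    (Hinv : EuclideanSpace ℝ (Fin m) →
      (EuclideanSpace ℝ (Fin p) →L[ℝ] EuclideanSpace ℝ (Fin p)))
    (hHinv : ∀ w ∈ W,
      (∑ g, w g • fderiv ℝ (gradient (L g)) (θ w)).comp (Hinv w) =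
        ContinuousLinearMap.id ℝ (EuclideanSpace ℝ (Fin p)) ∧
      (Hinv w).comp (∑ g, w g • fderiv ℝ (gradient (L g)) (θ w)) =
        ContinuousLinearMap.id ℝ (EuclideanSpace ℝ (Fin p))) :
    ∀ w ∈ W, ∀ i : Fin m,
      fderiv ℝ (fun v => ∑ g, q g * L g (θ v)) w (EuclideanSpace.single i 1) =
        - ⟪∑ g, q g • gradient (L g) (θ w), Hinv w (gradient (L i) (θ w))⟫ := by
  intro w hw i
  set e : EuclideanSpace ℝ (Fin m) := EuclideanSpace.single i 1
  have hH : (∑ g, w g • fderiv ℝ (gradient (L g)) (θ w)) (fderiv ℝ θ w e) =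
      -gradient (L i) (θ w) := by
    rw [← EuclideanSpace.sum_proj_single_smul (fun g => gradient (L g) (θ w)) i]
    exact sum_smul_fderiv_apply_fderiv_eq_neg (a := EuclideanSpace.proj)
      (fun g => (hL g).differentiable_gradient _) (hθ w hw)
      (eventually_of_mem (hW.mem_nhds hw) hstat) e
  have hθ' : fderiv ℝ θ w e = -Hinv w (gradient (L i) (θ w)) := by
    rw [← map_neg, ← hH, ← ContinuousLinearMap.comp_apply, (hHinv w hw).2,
      ContinuousLinearMap.id_apply]
  rw [fderiv_sum_mul_comp_apply (fun g => ((hL g).differentiable two_ne_zero) _) (hθ w hw),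
    hθ', inner_neg_right]
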